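/- Every 2×2 matrix B over the real octonion division algebra 𝕆 has a left eigenvalue: there exist λ ∈ 𝕆 and nonzero v ∈ 𝕆² with Bv = λv. Specifically, if B = [[a,b],[c,d]], either b = 0 (and a is an eigenvalue), or b ≠ 0 and any root s of b x² + (a−d)x − c gives eigenvalue a + bs with eigenvector (1, s)ᵀ. -/

import Mathlib

/-- Cayley–Dickson double (with γ = -1) of an algebra with involution. -/
def CD (A : Type*) : Type _ := A × A

namespace CD

variable {A : Type*}

instance [AddCommGroup A] : AddCommGroup (CD A) := inferInstanceAs (AddCommGroup (A × A))
noncomputable instance [AddCommGroup A] [Module ℝ A] : Module ℝ (CD A) :=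
  inferInstanceAs (Module ℝ (A × A))

/-- Build an element of the double from its two halves. -/
def mk (a b : A) : CD A := (a, b)

section
set_option linter.unusedSectionVars false

/-- A star operation fixing `1`. -/
class StarOne (A : Type*) [One A] [Star A] : Prop where
  star_one : star (1 : A) = 1

variable [NonAssocRing A] [StarAddMonoid A] [StarOne A]

instance : One (CD A) := ⟨((1 : A), 0)⟩
instance : Mul (CD A) :=
  ⟨fun x y => (x.1 * y.1 - star y.2 * x.2, y.2 * x.1 + x.2 * star y.1)⟩
instance : Star (CD A) := ⟨fun x => (star x.1, -x.2)⟩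

lemma mul_def (x y : CD A) :
    x * y = (x.1 * y.1 - star y.2 * x.2, y.2 * x.1 + x.2 * star y.1) := rfl
lemma one_def : (1 : CD A) = ((1 : A), 0) := rfl
lemma star_def (x : CD A) : star x = (star x.1, -x.2) := rfl
lemma add_def (x y : CD A) : x + y = (x.1 + y.1, x.2 + y.2) := rfl
lemma zero_def : (0 : CD A) = ((0 : A), 0) := rfl

instance instNonAssocRing : NonAssocRing (CD A) where
  __ := (inferInstance : AddCommGroup (CD A))
  left_distrib a b c := by
    rw [show a * b + a * c = ((a * b).1 + (a * c).1, (a * b).2 + (a * c).2) from rfl]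
    refine Prod.ext ?_ ?_ <;> simp only [mul_def] <;>
      simp [mul_def, add_def, mul_add, add_mul, star_add] <;> abel
  right_distrib a b c := by
    rw [show a * c + b * c = ((a * c).1 + (b * c).1, (a * c).2 + (b * c).2) from rfl]
    refine Prod.ext ?_ ?_ <;> simp only [mul_def] <;>
      simp [mul_def, add_def, mul_add, add_mul, star_add] <;> abel
  zero_mul a := by
    refine Prod.ext ?_ ?_ <;> simp only [mul_def] <;> simp [mul_def, zero_def]
  mul_zero a := by
    refine Prod.ext ?_ ?_ <;> simp only [mul_def] <;> simp [mul_def, zero_def]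
  one_mul a := by
    refine Prod.ext ?_ ?_ <;> simp only [mul_def] <;> simp [mul_def, one_def]
  mul_one a := by
    refine Prod.ext ?_ ?_ <;> simp only [mul_def] <;> simp [mul_def, one_def, StarOne.star_one]

instance instStarAddMonoid : StarAddMonoid (CD A) where
  star_involutive x := by
    refine Prod.ext ?_ ?_ <;> rw [star_def, star_def] <;> simp [star_def]
  star_add x y := by
    rw [show star x + star y = ((star x).1 + (star y).1, (star x).2 + (star y).2) from rfl]
    refine Prod.ext ?_ ?_ <;> simp only [star_def] <;> simp [star_def, add_def, add_comm]

instance instStarOne : StarOne (CD A) :=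
  ⟨Prod.ext (StarOne.star_one) (by simp only [star_def]; simp [one_def, star_def])⟩

end

end CD

instance : CD.StarOne ℝ := ⟨by simp⟩

/-- The real octonions, as a three-fold Cayley–Dickson double of ℝ. -/
def Octonion : Type := CD (CD (CD ℝ))

instance : NonAssocRing Octonion := inferInstanceAs (NonAssocRing (CD (CD (CD ℝ))))
instance : StarAddMonoid Octonion := inferInstanceAs (StarAddMonoid (CD (CD (CD ℝ))))
instance : CD.StarOne Octonion := inferInstanceAs (CD.StarOne (CD (CD (CD ℝ))))
noncomputable instance : Module ℝ Octonion := inferInstanceAs (Module ℝ (CD (CD (CD ℝ))))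

/-- The real sedenions, as the Cayley–Dickson double of the octonions. -/
def Sedenion : Type := CD Octonion

instance : NonAssocRing Sedenion := inferInstanceAs (NonAssocRing (CD Octonion))
instance : StarAddMonoid Sedenion := inferInstanceAs (StarAddMonoid (CD Octonion))
instance : CD.StarOne Sedenion := inferInstanceAs (CD.StarOne (CD Octonion))
noncomputable instance : Module ℝ Sedenion := inferInstanceAs (Module ℝ (CD Octonion))

/-- Assemble a complex number, quaternion, octonion, sedenion from real coordinates. -/
def mkC (f : ℕ → ℝ) (k : ℕ) : CD ℝ := CD.mk (f k) (f (k+1))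
def mkH (f : ℕ → ℝ) (k : ℕ) : CD (CD ℝ) := CD.mk (mkC f k) (mkC f (k+2))
def mkO (f : ℕ → ℝ) (k : ℕ) : Octonion := CD.mk (mkH f k) (mkH f (k+4))
def mkS (f : ℕ → ℝ) : Sedenion := CD.mk (mkO f 0) (mkO f 8)

/-- The standard basis `e₀, …, e₁₅` of the sedenions. -/
def sE (n : ℕ) : Sedenion := mkS (fun k => if k = n then 1 else 0)

/-- The standard basis `e₀, …, e₇` of the octonions. -/
def oE (n : ℕ) : Octonion := mkO (fun k => if k = n then 1 else 0) 0

/-- Powers in a (power-associative) non-associative algebra. -/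
def cdpow {A : Type*} [One A] [Mul A] (x : A) : ℕ → A
  | 0 => 1
  | n+1 => cdpow x n * x

/-!
For `b ≠ 0` the vector `(1, s)` is an eigenvector of `[[a, b], [c, d]]` exactly when
`b s² + (a - d) s = c`, because `(b s) s = b s²` in the alternative algebra `𝕆`.

To solve `b s² + e s = c`, look for `s` with prescribed trace `t` and norm `n`. Then
`s² = t s - n`, and the equation becomes the linear equation `(t b + e) s = n b + c`. Its solution
`s = (t b + e)⁻¹ (n b + c)` has a trace and a norm that are real rational functions of `(t, n)`,
and asking them to equal `t` and `n` is a system of two real equations. After a change of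
variables it asks for `τ, m` with `τ m = K τ` and `m² = D τ`, where `τ² D τ - K τ²` is a cubic
polynomial in `τ²` with positive leading coefficient; the intermediate value theorem gives a
solution. If `e` is a real multiple `μ b`, the linear equation can degenerate; instead
`s² + μ s = b⁻¹ c` is solved inside a copy of `ℂ` that contains `b⁻¹ c`.
-/

open Filter Polynomial in
theorem tendsto_cubic_atTop {a : ℝ} (ha : 0 < a) (b c d : ℝ) :
    Tendsto (fun x => a * x ^ 3 + b * x ^ 2 + c * x + d) atTop atTop := by
  refine (tendsto_atTop_of_leadingCoeff_nonneg (C a * X ^ 3 + C b * X ^ 2 + C c * X + C d)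
    (by rw [degree_cubic ha.ne']; norm_num) (by rw [leadingCoeff_cubic ha.ne']; exact ha.le)).congr
    fun x => ?_
  simp

theorem Continuous.nonneg_of_forall_gt {f : ℝ → ℝ} (hf : Continuous f) {a : ℝ}
    (h : ∀ x, a < x → 0 ≤ f x) : 0 ≤ f a := by
  have hsub : closure (Set.Ioi a) ⊆ {x | 0 ≤ f x} :=
    (isClosed_le continuous_const hf).closure_subset_iff.mpr h
  exact hsub (by simp [closure_Ioi])

open Filter in
theorem exists_mul_eq_and_sq_eq {D K : ℝ → ℝ} (hD : Continuous D) (hK : Continuous K)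
    (hlim : Tendsto (fun τ => τ ^ 2 * D τ - K τ ^ 2) atTop atTop) :
    ∃ τ m : ℝ, τ * m = K τ ∧ m ^ 2 = D τ := by
  have hQ : Continuous fun τ => τ ^ 2 * D τ - K τ ^ 2 := by fun_prop
  by_cases hneg : ∃ τ₁, 0 < τ₁ ∧ τ₁ ^ 2 * D τ₁ - K τ₁ ^ 2 < 0
  · obtain ⟨τ₁, hτ₁, hQτ₁⟩ := hneg
    obtain ⟨τ₂, hQτ₂, hτ₁₂⟩ := ((hlim.eventually_gt_atTop 0).and (eventually_ge_atTop τ₁)).exists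
    obtain ⟨τ, hτ, hQτ⟩ := intermediate_value_Icc hτ₁₂ hQ.continuousOn ⟨hQτ₁.le, hQτ₂.le⟩
    have hτ₀ : τ ≠ 0 := by linarith [hτ.1]
    refine ⟨τ, K τ / τ, by field_simp, ?_⟩
    field_simp
    linarith [hQτ]
  · push Not at hneg
    have hK₀ : K 0 = 0 := by
      have := hQ.nonneg_of_forall_gt hneg
      exact pow_eq_zero_iff two_ne_zero |>.mp (by nlinarith [sq_nonneg (K 0)])
    have hD₀ : 0 ≤ D 0 := hD.nonneg_of_forall_gt fun τ hτ => by
      have := hneg τ hτ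
      have : 0 < τ ^ 2 := by positivity
      nlinarith [sq_nonneg (K τ)]
    exact ⟨0, √(D 0), by rw [hK₀, zero_mul], Real.sq_sqrt hD₀⟩

theorem Matrix.mulVec_vec2 {α : Type*} [NonUnitalNonAssocSemiring α] (a b c d x y : α) :
    Matrix.mulVec !![a, b; c, d] ![x, y] = ![a * x + b * y, c * x + d * y] := by
  ext i
  fin_cases i <;> simp [Matrix.mulVec]

namespace CD

variable {A : Type*}

theorem mk_add_mk [AddCommGroup A] (a b c d : A) : mk a b + mk c d = mk (a + c) (b + d) := rfl

theorem mk_sub_mk [AddCommGroup A] (a b c d : A) : mk a b - mk c d = mk (a - c) (b - d) := rfl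

theorem neg_mk [AddCommGroup A] (a b : A) : -mk a b = mk (-a) (-b) := rfl

variable [NonAssocRing A] [StarAddMonoid A]

theorem mk_mul_mk (a b c d : A) : mk a b * mk c d = mk (a * c - star d * b) (d * a + b * star c) :=
  rfl

theorem star_mk (a b : A) : star (mk a b) = mk (star a) (-b) := rfl

end CD

namespace Octonion

def mk (x₀ x₁ x₂ x₃ x₄ x₅ x₆ x₇ : ℝ) : Octonion :=
  CD.mk (CD.mk (CD.mk x₀ x₁) (CD.mk x₂ x₃)) (CD.mk (CD.mk x₄ x₅) (CD.mk x₆ x₇))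

@[elab_as_elim]
theorem ind {P : Octonion → Prop} (h : ∀ x₀ x₁ x₂ x₃ x₄ x₅ x₆ x₇, P (mk x₀ x₁ x₂ x₃ x₄ x₅ x₆ x₇))
    (x : Octonion) : P x :=
  h x.1.1.1 x.1.1.2 x.1.2.1 x.1.2.2 x.2.1.1 x.2.1.2 x.2.2.1 x.2.2.2

theorem mk_inj {x₀ x₁ x₂ x₃ x₄ x₅ x₆ x₇ y₀ y₁ y₂ y₃ y₄ y₅ y₆ y₇ : ℝ} :
    mk x₀ x₁ x₂ x₃ x₄ x₅ x₆ x₇ = mk y₀ y₁ y₂ y₃ y₄ y₅ y₆ y₇ ↔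
      x₀ = y₀ ∧ x₁ = y₁ ∧ x₂ = y₂ ∧ x₃ = y₃ ∧ x₄ = y₄ ∧ x₅ = y₅ ∧ x₆ = y₆ ∧ x₇ = y₇ := by
  show ((((x₀, x₁), (x₂, x₃)), ((x₄, x₅), (x₆, x₇))) : ((ℝ × ℝ) × (ℝ × ℝ)) × ((ℝ × ℝ) × (ℝ × ℝ))) =
    (((y₀, y₁), (y₂, y₃)), ((y₄, y₅), (y₆, y₇))) ↔ _
  simp only [Prod.mk.injEq, and_assoc]

def re (x : Octonion) : ℝ := x.1.1.1

def normSq (x : Octonion) : ℝ :=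
  x.1.1.1 ^ 2 + x.1.1.2 ^ 2 + x.1.2.1 ^ 2 + x.1.2.2 ^ 2 +
    x.2.1.1 ^ 2 + x.2.1.2 ^ 2 + x.2.2.1 ^ 2 + x.2.2.2 ^ 2

def inner (x y : Octonion) : ℝ :=
  x.1.1.1 * y.1.1.1 + x.1.1.2 * y.1.1.2 + x.1.2.1 * y.1.2.1 + x.1.2.2 * y.1.2.2 +
    x.2.1.1 * y.2.1.1 + x.2.1.2 * y.2.1.2 + x.2.2.1 * y.2.2.1 + x.2.2.2 * y.2.2.2

section Coordinates

variable (x₀ x₁ x₂ x₃ x₄ x₅ x₆ x₇ y₀ y₁ y₂ y₃ y₄ y₅ y₆ y₇ r : ℝ)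

theorem zero_eq_mk : (0 : Octonion) = mk 0 0 0 0 0 0 0 0 := rfl

theorem one_eq_mk : (1 : Octonion) = mk 1 0 0 0 0 0 0 0 := rfl

theorem mk_add_mk : mk x₀ x₁ x₂ x₃ x₄ x₅ x₆ x₇ + mk y₀ y₁ y₂ y₃ y₄ y₅ y₆ y₇ =
    mk (x₀ + y₀) (x₁ + y₁) (x₂ + y₂) (x₃ + y₃) (x₄ + y₄) (x₅ + y₅) (x₆ + y₆) (x₇ + y₇) := rfl

theorem mk_sub_mk : mk x₀ x₁ x₂ x₃ x₄ x₅ x₆ x₇ - mk y₀ y₁ y₂ y₃ y₄ y₅ y₆ y₇ =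
    mk (x₀ - y₀) (x₁ - y₁) (x₂ - y₂) (x₃ - y₃) (x₄ - y₄) (x₅ - y₅) (x₆ - y₆) (x₇ - y₇) := rfl

theorem neg_mk : -mk x₀ x₁ x₂ x₃ x₄ x₅ x₆ x₇ =
    mk (-x₀) (-x₁) (-x₂) (-x₃) (-x₄) (-x₅) (-x₆) (-x₇) := rfl

theorem smul_mk : r • mk x₀ x₁ x₂ x₃ x₄ x₅ x₆ x₇ =
    mk (r * x₀) (r * x₁) (r * x₂) (r * x₃) (r * x₄) (r * x₅) (r * x₆) (r * x₇) := rfl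

theorem star_mk :
    star (mk x₀ x₁ x₂ x₃ x₄ x₅ x₆ x₇) = mk x₀ (-x₁) (-x₂) (-x₃) (-x₄) (-x₅) (-x₆) (-x₇) := rfl

theorem mk_mul_mk : mk x₀ x₁ x₂ x₃ x₄ x₅ x₆ x₇ * mk y₀ y₁ y₂ y₃ y₄ y₅ y₆ y₇ =
    mk (x₀*y₀ - x₁*y₁ - x₂*y₂ - x₃*y₃ - x₄*y₄ - x₅*y₅ - x₆*y₆ - x₇*y₇)
       (x₀*y₁ + x₁*y₀ - x₃*y₂ + x₂*y₃ - x₅*y₄ + x₄*y₅ - x₆*y₇ + x₇*y₆)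
       (x₀*y₂ - x₁*y₃ + x₂*y₀ + x₃*y₁ - x₆*y₄ - x₇*y₅ + x₄*y₆ + x₅*y₇)
       (x₁*y₂ + x₀*y₃ - x₂*y₁ + x₃*y₀ + x₆*y₅ - x₇*y₄ - x₅*y₆ + x₄*y₇)
       (x₀*y₄ - x₁*y₅ - x₂*y₆ - x₃*y₇ + x₄*y₀ + x₅*y₁ + x₆*y₂ + x₇*y₃)
       (x₁*y₄ + x₀*y₅ - x₂*y₇ + x₃*y₆ - x₄*y₁ + x₅*y₀ + x₇*y₂ - x₆*y₃)
       (x₂*y₄ - x₃*y₅ + x₀*y₆ + x₁*y₇ - x₄*y₂ + x₅*y₃ + x₆*y₀ - x₇*y₁)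
       (x₂*y₅ + x₃*y₄ - x₁*y₆ + x₀*y₇ - x₅*y₂ - x₄*y₃ + x₆*y₁ + x₇*y₀) := by
  show (_ * _ : CD (CD (CD ℝ))) = _
  simp only [mk, CD.mk_mul_mk, CD.star_mk, CD.mk_add_mk, CD.mk_sub_mk, CD.neg_mk, star_trivial]
  congr 3 <;> ring

theorem re_mk : re (mk x₀ x₁ x₂ x₃ x₄ x₅ x₆ x₇) = x₀ := rfl

theorem normSq_mk : normSq (mk x₀ x₁ x₂ x₃ x₄ x₅ x₆ x₇) =
    x₀ ^ 2 + x₁ ^ 2 + x₂ ^ 2 + x₃ ^ 2 + x₄ ^ 2 + x₅ ^ 2 + x₆ ^ 2 + x₇ ^ 2 := rfl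

theorem inner_mk : inner (mk x₀ x₁ x₂ x₃ x₄ x₅ x₆ x₇) (mk y₀ y₁ y₂ y₃ y₄ y₅ y₆ y₇) =
    x₀ * y₀ + x₁ * y₁ + x₂ * y₂ + x₃ * y₃ + x₄ * y₄ + x₅ * y₅ + x₆ * y₆ + x₇ * y₇ := rfl

end Coordinates

instance : Nontrivial Octonion :=
  ⟨0, 1, by rw [zero_eq_mk, one_eq_mk, Ne, mk_inj]; norm_num⟩

instance : IsScalarTower ℝ Octonion Octonion where
  smul_assoc r x y := by
    induction x using ind; induction y using ind
    simp only [smul_eq_mul, smul_mk, mk_mul_mk]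
    congr 1 <;> ring

instance : SMulCommClass ℝ Octonion Octonion where
  smul_comm r x y := by
    induction x using ind; induction y using ind
    simp only [smul_eq_mul, smul_mk, mk_mul_mk]
    congr 1 <;> ring

section Identities

variable (x y : Octonion) (r : ℝ)

theorem mul_mul_self : x * y * y = x * (y * y) := by
  induction x using ind; induction y using ind
  simp only [mk_mul_mk]
  congr 1 <;> ring

theorem mul_self_eq : x * x = (2 * re x) • x - normSq x • (1 : Octonion) := by
  induction x using ind
  simp only [mk_mul_mk, re_mk, normSq_mk, one_eq_mk, smul_mk, mk_sub_mk]
  congr 1 <;> ring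

theorem mul_star_mul : x * (star x * y) = normSq x • y := by
  induction x using ind; induction y using ind
  simp only [star_mk, mk_mul_mk, normSq_mk, smul_mk]
  congr 1 <;> ring

theorem normSq_mul : normSq (x * y) = normSq x * normSq y := by
  induction x using ind; induction y using ind
  simp only [mk_mul_mk, normSq_mk]
  ring

theorem normSq_star : normSq (star x) = normSq x := by
  induction x using ind
  simp only [star_mk, normSq_mk]
  ring

theorem normSq_smul : normSq (r • x) = r ^ 2 * normSq x := by
  induction x using ind
  simp only [smul_mk, normSq_mk]
  ring

theorem re_star_mul : re (star x * y) = inner x y := by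
  induction x using ind; induction y using ind
  simp only [star_mk, mk_mul_mk, re_mk, inner_mk]
  ring

theorem re_smul : re (r • x) = r * re x := rfl

theorem re_sub : re (x - y) = re x - re y := rfl

theorem re_one : re 1 = 1 := rfl

theorem normSq_nonneg : 0 ≤ normSq x := by
  induction x using ind
  rw [normSq_mk]
  positivity

theorem normSq_eq_zero {x : Octonion} : normSq x = 0 ↔ x = 0 := by
  induction x using ind with
  | h x₀ x₁ x₂ x₃ x₄ x₅ x₆ x₇ =>
    rw [normSq_mk, zero_eq_mk, mk_inj]
    constructor
    · intro h
      refine ⟨?_, ?_, ?_, ?_, ?_, ?_, ?_, ?_⟩ <;> nlinarith [sq_nonneg x₀, sq_nonneg x₁,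
        sq_nonneg x₂, sq_nonneg x₃, sq_nonneg x₄, sq_nonneg x₅, sq_nonneg x₆, sq_nonneg x₇]
    · rintro ⟨rfl, rfl, rfl, rfl, rfl, rfl, rfl, rfl⟩
      ring

theorem normSq_pos {x : Octonion} (hx : x ≠ 0) : 0 < normSq x :=
  (normSq_nonneg x).lt_of_ne' (normSq_eq_zero.not.mpr hx)

theorem normSq_smul_add (b e : Octonion) :
    normSq (r • b + e) = r ^ 2 * normSq b + 2 * r * inner b e + normSq e := by
  induction b using ind; induction e using ind
  simp only [smul_mk, mk_add_mk, normSq_mk, inner_mk]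
  ring

theorem inner_smul_add_smul_add (t n : ℝ) (b e c : Octonion) :
    inner (t • b + e) (n • b + c) =
      t * n * normSq b + t * inner b c + n * inner b e + inner e c := by
  induction b using ind; induction e using ind; induction c using ind
  simp only [smul_mk, mk_add_mk, normSq_mk, inner_mk]
  ring

end Identities

theorem mul_normSq_inv_smul_star_mul {x : Octonion} (hx : x ≠ 0) (y : Octonion) :
    x * ((normSq x)⁻¹ • (star x * y)) = y := by
  rw [mul_smul_comm, mul_star_mul, smul_smul, inv_mul_cancel₀ (normSq_pos hx).ne', one_smul]

theorem exists_mul_eq {x : Octonion} (hx : x ≠ 0) (y : Octonion) : ∃ z, x * z = y :=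
  ⟨_, mul_normSq_inv_smul_star_mul hx y⟩

theorem mul_mul_self_add_mul_eq {s : Octonion} {t n : ℝ} (hs : s * s = t • s - n • 1)
    (b e : Octonion) : b * (s * s) + e * s = (t • b + e) * s - n • b := by
  rw [hs, mul_sub, mul_smul_comm, mul_smul_comm, mul_one, add_mul, smul_mul_assoc]
  abel

-- With `β, p₁, p₂, p₃, E, C` standing for `normSq b, inner b e, inner b c, inner e c, normSq e,
-- normSq c`, the equations say that `(t • b + e)⁻¹ (n • b + c)` has trace `t` and norm `n`.
open Filter in
theorem exists_trace_normSq_solution {β : ℝ} (hβ : 0 < β) (p₁ p₂ p₃ E C : ℝ) :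
    ∃ t n : ℝ, 2 * (t * n * β + t * p₂ + n * p₁ + p₃) = t * (t ^ 2 * β + 2 * t * p₁ + E) ∧
      n ^ 2 * β + 2 * n * p₂ + C = n * (t ^ 2 * β + 2 * t * p₁ + E) := by
  set γ := (β * E - p₁ ^ 2) / β - 2 * p₂
  set X : ℝ → ℝ := fun τ => τ ^ 2 / β + γ
  have hlim : Tendsto (fun τ => τ ^ 2 * (X τ ^ 2 - 4 * β * C) - (-(p₁ * X τ + 2 * β * p₃)) ^ 2)
      atTop atTop := by
    have hX : Tendsto X atTop atTop :=
      tendsto_atTop_add_const_right _ _ ((tendsto_pow_atTop two_ne_zero).atTop_div_const hβ)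
    refine ((tendsto_cubic_atTop hβ (-(β * γ + p₁ ^ 2)) (-(4 * β ^ 2 * C + 4 * β * p₁ * p₃))
      (4 * β ^ 2 * C * γ - 4 * β ^ 2 * p₃ ^ 2)).comp hX).congr fun τ => ?_
    simp only [Function.comp, X]
    field_simp
    ring
  obtain ⟨τ, M, hK, hD⟩ := exists_mul_eq_and_sq_eq (by fun_prop) (by fun_prop) hlim
  -- `τ` and `M` are `β t + p₁` and `2 β n - (normSq (t • b + e) - 2 p₂)`.
  obtain ⟨t, rfl⟩ : ∃ t, τ = β * t + p₁ := ⟨(τ - p₁) / β, by field_simp; ring⟩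
  obtain ⟨n, rfl⟩ : ∃ n, M = 2 * β * n - X (β * t + p₁) :=
    ⟨(M + X (β * t + p₁)) / (2 * β), by field_simp; ring⟩
  have hX : X (β * t + p₁) = β * t ^ 2 + 2 * t * p₁ + E - 2 * p₂ := by
    simp only [X, γ]
    field_simp
    ring
  rw [hX] at hK hD
  refine ⟨t, n, mul_left_cancel₀ hβ.ne' ?_, mul_left_cancel₀ hβ.ne' ?_⟩
  · linear_combination hK
  · linear_combination hD / 4

theorem exists_mul_mul_self_add_mul_eq_of_forall_ne_smul {b e : Octonion} (hb : b ≠ 0)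
    (he : ∀ μ : ℝ, e ≠ μ • b) (c : Octonion) : ∃ s, b * (s * s) + e * s = c := by
  obtain ⟨t, n, htrace, hnorm⟩ := exists_trace_normSq_solution (normSq_pos hb)
    (inner b e) (inner b c) (inner e c) (normSq e) (normSq c)
  have hq : t • b + e ≠ 0 := fun h => he (-t) (by rw [neg_smul, eq_neg_of_add_eq_zero_right h])
  have hq₀ := normSq_pos hq
  set s := (normSq (t • b + e))⁻¹ • (star (t • b + e) * (n • b + c))
  have hs : s * s = t • s - n • 1 := by
    have hre : 2 * re s = t := by
      rw [re_smul, re_star_mul]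
      field_simp
      rw [inner_smul_add_smul_add, normSq_smul_add]
      linarith
    have hnormSq : normSq s = n := by
      rw [normSq_smul, normSq_mul, normSq_star]
      field_simp
      rw [normSq_smul_add, normSq_smul_add]
      linarith
    rw [mul_self_eq, hre, hnormSq]
  refine ⟨s, ?_⟩
  rw [mul_mul_self_add_mul_eq hs, mul_normSq_inv_smul_star_mul hq, add_sub_cancel_left]

noncomputable def ofComplex (j : Octonion) (z : ℂ) : Octonion := z.re • 1 + z.im • j

theorem ofComplex_mul {j : Octonion} (hj : j * j = -1) (z w : ℂ) :
    ofComplex j (z * w) = ofComplex j z * ofComplex j w := by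
  simp only [ofComplex, Complex.mul_re, Complex.mul_im, add_mul, mul_add, smul_mul_assoc,
    mul_smul_comm, one_mul, mul_one, hj]
  module

theorem ofComplex_add (j : Octonion) (z w : ℂ) :
    ofComplex j (z + w) = ofComplex j z + ofComplex j w := by
  simp only [ofComplex, Complex.add_re, Complex.add_im]
  module

theorem ofComplex_ofReal_mul (j : Octonion) (r : ℝ) (z : ℂ) :
    ofComplex j (r * z) = r • ofComplex j z := by
  simp only [ofComplex, Complex.re_ofReal_mul, Complex.im_ofReal_mul]
  module

theorem exists_ofComplex_eq (w : Octonion) :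
    ∃ j : Octonion, j * j = -1 ∧ ∃ z : ℂ, ofComplex j z = w := by
  set v := w - re w • 1
  have hv : v * v = -(normSq v • 1) := by
    rw [mul_self_eq, re_sub, re_smul, re_one]
    simp
  by_cases hv₀ : v = 0
  · refine ⟨mk 0 1 0 0 0 0 0 0, ?_, re w, ?_⟩
    · rw [mk_mul_mk, one_eq_mk, neg_mk]
      norm_num
    · rw [ofComplex, Complex.ofReal_re, Complex.ofReal_im, zero_smul, add_zero]
      exact (sub_eq_zero.mp hv₀).symm
  · set ρ := √(normSq v)
    have hρ : 0 < ρ := Real.sqrt_pos.mpr (normSq_pos hv₀)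
    refine ⟨ρ⁻¹ • v, ?_, ⟨re w, ρ⟩, ?_⟩
    · have hρρ : ρ * ρ = normSq v := Real.mul_self_sqrt (normSq_nonneg v)
      rw [smul_mul_assoc, mul_smul_comm, smul_smul, hv, smul_neg, smul_smul, ← hρρ,
        show ρ⁻¹ * ρ⁻¹ * (ρ * ρ) = 1 by field_simp, one_smul]
    · show re w • 1 + ρ • ρ⁻¹ • v = w
      rw [smul_smul, mul_inv_cancel₀ hρ.ne', one_smul, add_sub_cancel]

theorem exists_mul_self_add_smul_eq (μ : ℝ) (w : Octonion) : ∃ s, s * s + μ • s = w := by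
  obtain ⟨j, hj, ω, rfl⟩ := exists_ofComplex_eq w
  obtain ⟨δ, hδ⟩ := IsAlgClosed.exists_eq_mul_self (ω + (μ : ℂ) ^ 2 / 4)
  refine ⟨ofComplex j (δ - μ / 2), ?_⟩
  rw [← ofComplex_mul hj, ← ofComplex_ofReal_mul, ← ofComplex_add]
  congr 1
  linear_combination -hδ

theorem exists_mul_mul_self_add_mul_eq {b : Octonion} (hb : b ≠ 0) (e c : Octonion) :
    ∃ s, b * (s * s) + e * s = c := by
  by_cases he : ∃ μ : ℝ, e = μ • b
  · obtain ⟨μ, rfl⟩ := he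
    obtain ⟨w, rfl⟩ := exists_mul_eq hb c
    obtain ⟨s, hs⟩ := exists_mul_self_add_smul_eq μ w
    exact ⟨s, by rw [smul_mul_assoc, ← mul_smul_comm, ← mul_add, hs]⟩
  · push Not at he
    exact exists_mul_mul_self_add_mul_eq_of_forall_ne_smul hb he c

end Octonion

/-- Every `2 × 2` matrix `B = [[a,b],[c,d]]` over the real octonions
has a left eigenvalue. Specifically, if `b = 0` then `a` is a left eigenvalue, and if
`b ≠ 0` then any root `s` of `b x² + (a - d)x - c` yields the left eigenvalue `a + b s`
with eigenvector `(1, s)ᵀ`. -/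
theorem stmt15 (a b c d : Octonion) :
    (∃ (lam : Octonion) (v : Fin 2 → Octonion), v ≠ 0 ∧
      Matrix.mulVec !![a, b; c, d] v = lam • v) ∧
    (b = 0 → ∃ v : Fin 2 → Octonion, v ≠ 0 ∧
      Matrix.mulVec !![a, b; c, d] v = a • v) ∧
    (b ≠ 0 → ∀ s : Octonion, b * (s * s) + (a - d) * s - c = 0 →
      Matrix.mulVec !![a, b; c, d] ![1, s] = (a + b * s) • ![1, s]) := by
  have hvec_ne {x : Octonion} (y : Octonion) (hx : x ≠ 0) : ![x, y] ≠ 0 :=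
    fun h => hx (congrFun h 0)
  have hroot (s : Octonion) (hs : b * (s * s) + (a - d) * s - c = 0) :
      Matrix.mulVec !![a, b; c, d] ![1, s] = (a + b * s) • ![1, s] := by
    rw [sub_eq_zero] at hs
    simp only [Matrix.mulVec_vec2, Matrix.smul_vec2, smul_eq_mul, mul_one, add_mul,
      Octonion.mul_mul_self, ← hs, sub_mul]
    congr 1
    abel
  have hlower (hb : b = 0) :
      ∃ v : Fin 2 → Octonion, v ≠ 0 ∧ Matrix.mulVec !![a, b; c, d] v = a • v := by
    subst hb
    by_cases had : a - d = 0
    · refine ⟨![0, 1], fun h => one_ne_zero (congrFun h 1), ?_⟩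
      rw [sub_eq_zero] at had
      simp [had]
    · obtain ⟨v, hv⟩ := Octonion.exists_mul_eq had c
      refine ⟨![1, v], hvec_ne _ one_ne_zero, ?_⟩
      simp only [Matrix.mulVec_vec2, Matrix.smul_vec2, smul_eq_mul, mul_one, zero_mul, add_zero,
        ← hv, sub_mul]
      congr 1
      abel
  refine ⟨?_, hlower, fun _ => hroot⟩
  by_cases hb : b = 0
  · obtain ⟨v, hv, hav⟩ := hlower hb
    exact ⟨a, v, hv, hav⟩
  · obtain ⟨s, hs⟩ := Octonion.exists_mul_mul_self_add_mul_eq hb (a - d) c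
    exact ⟨_, _, hvec_ne s one_ne_zero, hroot s (sub_eq_zero.mpr hs)⟩
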